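/- Let L ≥ 2, h ∈ ℝ^L, φ ∈ ℝ^L, and θ̄_j ∈ {0, π} for each j ∈ {1,…,L}. On (ℂ²)^{⊗L} set H_I[h] = (π/4)Σ_{j=1}^{L} σ^z_j σ^z_{j+1} + Σ_{j=1}^{L} h_j σ^z_j (site indices mod L) and H_K = −(π/4)Σ_{j=1}^{L} σ^x_j. Then there exists c ∈ ℂ with |c| = 1 such that exp(−iH_K)·exp(−iH_I[h]) applied to the longitudinal product state ⊗_{j=1}^{L}(cos(θ̄_j/2)|↑⟩ + e^{iφ_j} sin(θ̄_j/2)|↓⟩) equals c · ⊗_{j=1}^{L} 2^{−1/2}(|↑⟩ + e^{i(π/2−θ̄_j)}|↓⟩); i.e., one Floquet step maps any longitudinal separating product state, up to a global phase, to a transverse separating product state. -/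

import Mathlib

noncomputable section
open Complex Matrix Finset

abbrev QOp (ι : Type) := Matrix (ι → Fin 2) (ι → Fin 2) ℂ

def pauliX : Matrix (Fin 2) (Fin 2) ℂ := !![0, 1; 1, 0]
def pauliZ : Matrix (Fin 2) (Fin 2) ℂ := !![1, 0; 0, -1]

/-- Single-site operator `M` acting on site `j` (identity elsewhere). -/
def site {ι : Type} [DecidableEq ι] [Fintype ι] (M : Matrix (Fin 2) (Fin 2) ℂ) (j : ι) :
    QOp ι :=
  Matrix.of fun x y => ∏ k, if k = j then M (x k) (y k) else if x k = y k then (1 : ℂ) else 0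

/-- Matrix exponential. -/
abbrev mexp {ι : Type} [DecidableEq ι] [Fintype ι] (A : QOp ι) : QOp ι :=
  NormedSpace.exp A

/-- `H_I[h] = (π/4)Σ_j σ^z_j σ^z_{j+1} + Σ_j h_j σ^z_j` (site indices mod `L`). -/
def HI (L : ℕ) (h : Fin L → ℝ) : QOp (Fin L) :=
  ((Real.pi / 4 : ℝ) : ℂ) • ∑ j : Fin L, site pauliZ j * site pauliZ (finRotate L j)
    + ∑ j : Fin L, ((h j : ℝ) : ℂ) • site pauliZ j

/-- `H_K = −(π/4)Σ_j σ^x_j`. -/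
def HK (L : ℕ) : QOp (Fin L) :=
  ((-(Real.pi / 4) : ℝ) : ℂ) • ∑ j : Fin L, site pauliX j

/-- The product state `⊗_j (cos(θ_j/2)|↑⟩ + e^{iφ_j} sin(θ_j/2)|↓⟩)`
(`↑` is the `σ^z`-eigenvector `0`, `↓` is `1`). -/
def prodState (L : ℕ) (θ φ : Fin L → ℝ) : (Fin L → Fin 2) → ℂ :=
  fun s => ∏ j : Fin L,
    (if s j = 0 then ((Real.cos (θ j / 2) : ℝ) : ℂ)
      else Complex.exp (Complex.I * ((φ j : ℝ) : ℂ)) * ((Real.sin (θ j / 2) : ℝ) : ℂ))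

/-- The transverse separating state `⊗_j 2^{−1/2}(|↑⟩ + e^{iψ_j}|↓⟩)`. -/
def transState (L : ℕ) (ψ : Fin L → ℝ) : (Fin L → Fin 2) → ℂ :=
  fun s => ∏ j : Fin L,
    (((Real.sqrt 2 : ℝ) : ℂ))⁻¹ *
      (if s j = 0 then 1 else Complex.exp (Complex.I * ((ψ j : ℝ) : ℂ)))

/-!
For `θ̄ⱼ ∈ {0, π}` the longitudinal state is, up to a phase, the single `σᶻ` basis configuration
`s₀`. The Ising part `H_I[h]` is diagonal in that basis, so it only contributes the phase
`e^{-iE(s₀)}`. The kick `exp(-iH_K) = ⊗ⱼ exp(iπ/4 σˣ)` factorises over sites, and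
`exp(iπ/4 σˣ) = (1 + iσˣ)/√2` sends `|↑⟩` to `(|↑⟩ + i|↓⟩)/√2` and `|↓⟩` to `i(|↑⟩ - i|↓⟩)/√2`.
-/

open scoped Real

namespace Matrix

variable {ι n R : Type*} [Fintype ι]

def piKronecker [CommMonoid R] (A : ι → Matrix n n R) : Matrix (ι → n) (ι → n) R :=
  of fun x y => ∏ i, A i (x i) (y i)

@[simp]
theorem piKronecker_apply [CommMonoid R] (A : ι → Matrix n n R) (x y : ι → n) :
    piKronecker A x y = ∏ i, A i (x i) (y i) := rfl

theorem piKronecker_one [DecidableEq n] [CommSemiring R] :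
    piKronecker (1 : ι → Matrix n n R) = 1 := by
  ext x y
  simp only [piKronecker_apply, Pi.one_apply, one_apply]
  split_ifs with hxy
  · simp [hxy]
  · obtain ⟨i, hi⟩ := Function.ne_iff.mp hxy
    exact Finset.prod_eq_zero (Finset.mem_univ i) (if_neg hi)

variable [DecidableEq ι] [Fintype n] [CommSemiring R]

theorem piKronecker_mul (A B : ι → Matrix n n R) :
    piKronecker A * piKronecker B = piKronecker (A * B) := by
  ext x y
  simp only [mul_apply, piKronecker_apply, Pi.mul_apply, ← Finset.prod_mul_distrib]
  rw [Finset.prod_univ_sum, Fintype.piFinset_univ]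

def piKroneckerMonoidHom [DecidableEq n] : (ι → Matrix n n R) →* Matrix (ι → n) (ι → n) R where
  toFun := piKronecker
  map_one' := piKronecker_one
  map_mul' A B := (piKronecker_mul A B).symm

theorem piKronecker_mulVec_prod (A : ι → Matrix n n R) (v : ι → n → R) :
    piKronecker A *ᵥ (fun y => ∏ i, v i (y i)) = fun x => ∏ i, (A i *ᵥ v i) (x i) := by
  ext x
  simp only [mulVec, dotProduct, piKronecker_apply, ← Finset.prod_mul_distrib]
  rw [Finset.prod_univ_sum, Fintype.piFinset_univ]

end Matrix

theorem Matrix.sum_diagonal {κ n α : Type*} [DecidableEq n] [AddCommMonoid α] (s : Finset κ)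
    (d : κ → n → α) : ∑ k ∈ s, diagonal (d k) = diagonal (∑ k ∈ s, d k) :=
  (map_sum (diagonalAddMonoidHom n α) d s).symm

theorem Matrix.diagonal_mulVec_of_eq_zero {m R : Type*} [Fintype m] [DecidableEq m]
    [NonUnitalNonAssocSemiring R] (d : m → R) {v : m → R} {s₀ : m}
    (hv : ∀ s ≠ s₀, v s = 0) : diagonal d *ᵥ v = d s₀ • v := by
  ext s
  rw [mulVec_diagonal, Pi.smul_apply, smul_eq_mul]
  by_cases hs : s = s₀
  · rw [hs]
  · rw [hv s hs, mul_zero, mul_zero]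

theorem prod_apply_eq_zero_of_ne {ι n R : Type*} [Fintype ι] [CommMonoidWithZero R]
    {v : ι → n → R} {s₀ : ι → n} (hv : ∀ i, ∀ b ≠ s₀ i, v i b = 0) :
    ∀ s ≠ s₀, ∏ i, v i (s i) = 0 := by
  intro s hs
  obtain ⟨i, hi⟩ := Function.ne_iff.mp hs
  exact Finset.prod_eq_zero (Finset.mem_univ i) (hv i _ hi)

section Site

variable {ι : Type} [DecidableEq ι] [Fintype ι]

theorem site_eq_piKronecker (M : Matrix (Fin 2) (Fin 2) ℂ) (j : ι) :
    site M j = piKronecker (Pi.mulSingle j M) := by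
  ext x y
  refine Finset.prod_congr rfl fun k _ => ?_
  by_cases hk : k = j
  · subst hk; simp
  · simp [hk, one_apply]

theorem site_apply (M : Matrix (Fin 2) (Fin 2) ℂ) (j : ι) (x y : ι → Fin 2) :
    site M j x y = M (x j) (y j) * ∏ k ∈ {j}ᶜ, if x k = y k then 1 else 0 := by
  rw [site, of_apply, Fintype.prod_eq_mul_prod_compl j, if_pos rfl]
  congr 1
  exact Finset.prod_congr rfl fun k hk =>
    if_neg (Finset.mem_compl.mp hk ∘ Finset.mem_singleton.mpr)

theorem site_commute {j k : ι} (hjk : j ≠ k) (M N : Matrix (Fin 2) (Fin 2) ℂ) :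
    Commute (site M j) (site N k) := by
  simp only [site_eq_piKronecker, Commute, SemiconjBy, piKronecker_mul,
    (Pi.mulSingle_commute (f := fun _ => Matrix (Fin 2) (Fin 2) ℂ) hjk M N).eq]

def siteAlgHom (j : ι) : Matrix (Fin 2) (Fin 2) ℂ →ₐ[ℂ] QOp ι :=
  AlgHom.ofLinearMap
    { toFun M := site M j
      map_add' M N := by ext x y; simp only [site_apply, Matrix.add_apply, add_mul]
      map_smul' c M := by
        ext x y
        simp only [site_apply, Matrix.smul_apply, smul_eq_mul, mul_assoc, RingHom.id_apply] }
    (by simp only [LinearMap.coe_mk, AddHom.coe_mk, site_eq_piKronecker, Pi.mulSingle_one,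
      piKronecker_one])
    (fun M N => by simp only [LinearMap.coe_mk, AddHom.coe_mk, site_eq_piKronecker,
      piKronecker_mul, Pi.mulSingle_mul])

theorem site_smul (c : ℂ) (M : Matrix (Fin 2) (Fin 2) ℂ) (j : ι) :
    site (c • M) j = c • site M j :=
  map_smul (siteAlgHom j) c M

theorem site_diagonal (d : Fin 2 → ℂ) (j : ι) :
    site (diagonal d) j = diagonal fun x => d (x j) := by
  ext x y
  rw [site_apply]
  by_cases hxy : x = y
  · simp [hxy]
  · obtain ⟨k, hk⟩ := Function.ne_iff.mp hxy
    rw [diagonal_apply_ne _ hxy]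
    by_cases hkj : k = j
    · rw [diagonal_apply_ne _ (hkj ▸ hk), zero_mul]
    · rw [Finset.prod_eq_zero (i := k) (by simpa using hkj) (if_neg hk), mul_zero]

theorem exp_site (M : Matrix (Fin 2) (Fin 2) ℂ) (j : ι) :
    NormedSpace.exp (site M j) = site (NormedSpace.exp M) j := by
  -- `map_exp` needs normed algebras; `exp` itself does not depend on the choice of norm.
  open scoped Matrix.Norms.Operator in
  exact (NormedSpace.map_exp (siteAlgHom j) (LinearMap.continuous_of_finiteDimensional
    (siteAlgHom j).toLinearMap) M).symm

theorem exp_sum_site (M : ι → Matrix (Fin 2) (Fin 2) ℂ) :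
    NormedSpace.exp (∑ j, site (M j) j) = piKronecker fun j => NormedSpace.exp (M j) := by
  set E := fun j => NormedSpace.exp (M j)
  rw [Matrix.exp_sum_of_commute _ _ fun j _ k _ hjk => site_commute hjk _ _]
  calc _ = univ.noncommProd (fun j => piKroneckerMonoidHom (Pi.mulSingle j (E j)))
        fun j _ k _ _ => (Pi.mulSingle_apply_commute E j k).map piKroneckerMonoidHom :=
        noncommProd_congr rfl (fun j _ => by rw [exp_site, site_eq_piKronecker]; rfl) _
    _ = piKroneckerMonoidHom (univ.noncommProd (fun j => Pi.mulSingle j (E j))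
        fun j _ k _ _ => Pi.mulSingle_apply_commute E j k) := (map_noncommProd _ _ _ _).symm
    _ = piKronecker E := by rw [noncommProd_mulSingle]; rfl

end Site

def spin (b : Fin 2) : ℝ := if b = 0 then 1 else -1

theorem pauliZ_eq_diagonal : pauliZ = diagonal fun b => (spin b : ℂ) := by
  ext i j; fin_cases i <;> fin_cases j <;> simp [pauliZ, spin]

theorem exp_smul_pauliX (t : ℂ) :
    NormedSpace.exp (t • pauliX) = !![cosh t, sinh t; sinh t, cosh t] := by
  set H : Matrix (Fin 2) (Fin 2) ℂ := !![1, 1; 1, -1]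
  have hH : H⁻¹ = !![2⁻¹, 2⁻¹; 2⁻¹, -2⁻¹] := inv_eq_left_inv <| by
    ext i j; fin_cases i <;> fin_cases j <;> norm_num [H]
  have hHunit : IsUnit H := (isUnit_iff_isUnit_det H).mpr <| by norm_num [H, det_fin_two]
  have hexp : NormedSpace.exp ![t, -t] = ![cexp t, cexp (-t)] := by
    ext i; fin_cases i <;> simp [Complex.exp_eq_exp_ℂ]
  have hdiag : t • pauliX = H * diagonal ![t, -t] * H⁻¹ := by
    rw [hH, diagonal_vec2, mul_fin_two, mul_fin_two]
    ext i j; fin_cases i <;> fin_cases j <;> simp [pauliX] <;> ring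
  have hcosh : cosh t = (cexp t + cexp (-t)) / 2 := by rw [← two_cosh]; ring
  have hsinh : sinh t = (cexp t - cexp (-t)) / 2 := by rw [← two_sinh]; ring
  rw [hdiag, exp_conj _ _ hHunit, exp_diagonal, hexp, hH, diagonal_vec2, mul_fin_two, mul_fin_two,
    hcosh, hsinh]
  ext i j; fin_cases i <;> fin_cases j <;> simp <;> ring

def kick : Matrix (Fin 2) (Fin 2) ℂ := (√2 : ℂ)⁻¹ • !![1, I; I, 1]

theorem exp_pi_div_four_mul_I_smul_pauliX :
    NormedSpace.exp ((((π / 4 : ℝ) : ℂ) * I) • pauliX) = kick := by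
  have hcos : ((Real.cos (π / 4) : ℝ) : ℂ) = (√2 : ℂ)⁻¹ := by
    have h2 : (√2 : ℂ) * √2 = 2 := by exact_mod_cast Real.mul_self_sqrt zero_le_two
    rw [Real.cos_pi_div_four]
    refine eq_inv_of_mul_eq_one_left ?_
    push_cast
    linear_combination h2 / 2
  rw [exp_smul_pauliX, cosh_mul_I, sinh_mul_I, ← ofReal_cos, ← ofReal_sin, Real.sin_pi_div_four,
    ← Real.cos_pi_div_four, hcos, kick]
  ext i j; fin_cases i <;> fin_cases j <;> simp [mul_comm]

def longitudinalVec (θ φ : ℝ) : Fin 2 → ℂ := fun b =>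
  if b = 0 then (Real.cos (θ / 2) : ℂ) else cexp (I * φ) * (Real.sin (θ / 2) : ℂ)

def transverseVec (ψ : ℝ) : Fin 2 → ℂ := fun b =>
  (√2 : ℂ)⁻¹ * if b = 0 then 1 else cexp (I * ψ)

theorem exists_longitudinalVec_eq_zero_of_ne {θ : ℝ} (hθ : θ = 0 ∨ θ = π) (φ : ℝ) :
    ∃ b, ∀ b' ≠ b, longitudinalVec θ φ b' = 0 := by
  rcases hθ with rfl | rfl
  · exact ⟨0, fun b' hb' => by simp [longitudinalVec, hb']⟩
  · refine ⟨1, fun b' hb' => ?_⟩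
    have : b' = 0 := by fin_cases b' <;> simp_all
    simp [longitudinalVec, this]

theorem kick_mulVec_longitudinalVec {θ : ℝ} (hθ : θ = 0 ∨ θ = π) (φ : ℝ) :
    ∃ c : ℂ, ‖c‖ = 1 ∧ kick *ᵥ longitudinalVec θ φ = c • transverseVec (π / 2 - θ) := by
  rcases hθ with rfl | rfl
  · have hψ : cexp (I * (π / 2)) = I := by
      rw [mul_comm]; exact exp_pi_div_two_mul_I
    refine ⟨1, norm_one, ?_⟩
    ext b; fin_cases b <;> simp [kick, longitudinalVec, transverseVec, mulVec, dotProduct, hψ]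
  · have hψ : cexp (I * (π / 2 - π)) = -I := by
      rw [← exp_neg_pi_div_two_mul_I]; ring_nf
    refine ⟨I * cexp (I * φ), by simp [norm_exp_ofReal_mul_I, mul_comm I], ?_⟩
    ext b; fin_cases b <;> simp [kick, longitudinalVec, transverseVec, mulVec, dotProduct, hψ]
    · ring
    · linear_combination (√2 : ℂ)⁻¹ * cexp (I * φ) * I_mul_I

section KickedIsing

variable (L : ℕ)

def isingEnergy (h : Fin L → ℝ) (x : Fin L → Fin 2) : ℝ :=
  π / 4 * ∑ j, spin (x j) * spin (x (finRotate L j)) + ∑ j, h j * spin (x j)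

theorem HI_eq_diagonal (h : Fin L → ℝ) : HI L h = diagonal fun x => (isingEnergy L h x : ℂ) := by
  simp only [HI, pauliZ_eq_diagonal, site_diagonal, diagonal_mul_diagonal, ← diagonal_smul,
    sum_diagonal, diagonal_add]
  congr 1
  ext x
  simp [isingEnergy, Finset.mul_sum]

theorem exp_neg_I_smul_HI (h : Fin L → ℝ) :
    mexp (-I • HI L h) = diagonal fun x => cexp (((-isingEnergy L h x : ℝ) : ℂ) * I) := by
  rw [mexp, HI_eq_diagonal, ← diagonal_smul, exp_diagonal]
  congr 1
  ext x
  rw [Pi.coe_exp, ← Complex.exp_eq_exp_ℂ, Pi.smul_apply, smul_eq_mul]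
  push_cast
  ring_nf

theorem exp_neg_I_smul_HK : mexp (-I • HK L) = piKronecker fun _ => kick := by
  have hHK : -I • HK L = ∑ j, site ((((π / 4 : ℝ) : ℂ) * I) • pauliX) j := by
    rw [HK, smul_smul, Finset.smul_sum]
    congr 1
    ext1 j
    rw [site_smul]
    push_cast
    ring_nf
  rw [mexp, hHK, exp_sum_site, exp_pi_div_four_mul_I_smul_pauliX]

theorem prodState_eq_prod (θ φ : Fin L → ℝ) :
    prodState L θ φ = fun s => ∏ j, longitudinalVec (θ j) (φ j) (s j) := rfl

theorem transState_eq_prod (ψ : Fin L → ℝ) :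
    transState L ψ = fun s => ∏ j, transverseVec (ψ j) (s j) := rfl

end KickedIsing

theorem floquet_maps_longitudinal_to_transverse_general (L : ℕ)
    (h φ θb : Fin L → ℝ) (hθ : ∀ j, θb j = 0 ∨ θb j = Real.pi) :
    ∃ c : ℂ, ‖c‖ = 1 ∧
      (mexp ((-Complex.I) • HK L) * mexp ((-Complex.I) • HI L h)).mulVec
          (prodState L θb φ)
        = c • transState L (fun j => Real.pi / 2 - θb j) := by
  choose s₀ hs₀ using fun j => exists_longitudinalVec_eq_zero_of_ne (hθ j) (φ j)
  choose c hc_norm hc using fun j => kick_mulVec_longitudinalVec (hθ j) (φ j)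
  have hsupp : ∀ s ≠ s₀, prodState L θb φ s = 0 := prod_apply_eq_zero_of_ne hs₀
  refine ⟨cexp (((-isingEnergy L h s₀ : ℝ) : ℂ) * I) * ∏ j, c j, ?_, ?_⟩
  · rw [norm_mul, norm_exp_ofReal_mul_I, norm_prod, Finset.prod_eq_one fun j _ => hc_norm j,
      one_mul]
  · rw [← mulVec_mulVec, exp_neg_I_smul_HI, diagonal_mulVec_of_eq_zero _ hsupp, mulVec_smul,
      exp_neg_I_smul_HK, prodState_eq_prod, piKronecker_mulVec_prod, transState_eq_prod]
    ext x
    simp only [hc, Pi.smul_apply, smul_eq_mul, Finset.prod_mul_distrib, mul_assoc]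

/-- **One Floquet step maps longitudinal separating states to transverse separating
states up to a global phase.** -/
theorem floquet_maps_longitudinal_to_transverse (L : ℕ) (hL : 2 ≤ L)
    (h φ θb : Fin L → ℝ) (hθ : ∀ j, θb j = 0 ∨ θb j = Real.pi) :
    ∃ c : ℂ, ‖c‖ = 1 ∧
      (mexp ((-Complex.I) • HK L) * mexp ((-Complex.I) • HI L h)).mulVec
          (prodState L θb φ)
        = c • transState L (fun j => Real.pi / 2 - θb j) :=
  floquet_maps_longitudinal_to_transverse_general L h φ θb hθ
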